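/- arXiv:1212.5380 — 11 statements merged into one kernel-verified Lean document; each statement's English description precedes it below -/
import Mathlib

section
/- Let L be a finite-dimensional Lie algebra over a field K equipped with a nondegenerate skew-symmetric bilinear form ω satisfying the closedness condition ω(⁅x,y⁆,z) + ω(⁅y,z⁆,x) + ω(⁅z,x⁆,y) = 0 for all x,y,z, and let * be the bilinear product on L determined by ω(x*y, z) = −ω(y, ⁅x,z⁆). Then the following are equivalent: (a) there exists a right-unit for * (an element x₀ with x*x₀ = x for all x); (b) there exists a linear functional α ∈ L* such that ω(x,y) = −α(⁅x,y⁆) for all x, y ∈ L (i.e., (L, ω) is a Frobenius Lie algebra). -/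
/-- For a quasi-Frobenius Lie algebra `(L, ω)` with associated product `*`
determined by `ω(x*y, z) = -ω(y, ⁅x,z⁆)`, the existence of a right-unit for `*` is
equivalent to `ω` being exact, i.e. `(L, ω)` being a Frobenius Lie algebra. -/
theorem stmt_5 {K L : Type*} [Field K] [LieRing L] [LieAlgebra K L]
    [FiniteDimensional K L]
    (ω : L →ₗ[K] L →ₗ[K] K)
    (hskew : ∀ x y : L, ω x y = -ω y x)
    (hnd : ∀ x : L, (∀ y : L, ω x y = 0) → x = 0)
    (hclosed : ∀ x y z : L, ω ⁅x, y⁆ z + ω ⁅y, z⁆ x + ω ⁅z, x⁆ y = 0)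
    (mul : L →ₗ[K] L →ₗ[K] L)
    (hmul : ∀ x y z : L, ω (mul x y) z = -ω y ⁅x, z⁆) :
    (∃ x₀ : L, ∀ x : L, mul x x₀ = x) ↔
      (∃ α : Module.Dual K L, ∀ x y : L, ω x y = -α ⁅x, y⁆) := by
  constructor
  · rintro ⟨x₀, hx₀⟩
    refine ⟨ω x₀, fun x y => ?_⟩
    have := hmul x x₀ y
    rw [hx₀] at this
    simpa using this
  · rintro ⟨α, hα⟩
    have hinj : Function.Injective ω := by
      rw [← LinearMap.ker_eq_bot, LinearMap.ker_eq_bot']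
      intro x hx
      exact hnd x fun y => by rw [hx]; rfl
    have hsurj : Function.Surjective ω :=
      (LinearMap.injective_iff_surjective_of_finrank_eq_finrank
        Subspace.dual_finrank_eq.symm).mp hinj
    obtain ⟨x₀, hx₀⟩ := hsurj α
    refine ⟨x₀, fun x => ?_⟩
    have key : ∀ z : L, ω (mul x x₀ - x) z = 0 := by
      intro z
      have h1 : ω (mul x x₀) z = -ω x₀ ⁅x, z⁆ := hmul x x₀ z
      have h2 : ω x₀ ⁅x, z⁆ = α ⁅x, z⁆ := by rw [hx₀]
      have h3 : ω x z = -α ⁅x, z⁆ := hα x z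
      simp [h1, h2, h3]
    have := hnd _ key
    exact sub_eq_zero.mp this
end

section
/- Let (L, α) be a Frobenius Lie algebra over a field K with form ω(x,y) = −α(⁅x,y⁆) and associated product * determined by ω(x*y,z) = −ω(y,⁅x,z⁆). Then: (i) every right-unit v₀ (x*v₀ = x for all x) satisfies ω(⁅v₀,x⁆, y) + ω(x, ⁅v₀,y⁆) = −ω(x,y) for all x,y ∈ L; (ii) every right-nil v₀ (x*v₀ = 0 for all x) satisfies ω(⁅v₀,x⁆, y) + ω(x, ⁅v₀,y⁆) = 0 for all x,y ∈ L. -/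
/-- In a Frobenius Lie algebra `(L, α)` with form `ω` and associated
product `*`: (i) every right-unit `v₀` satisfies
`ω(⁅v₀,x⁆, y) + ω(x, ⁅v₀,y⁆) = -ω(x,y)`; (ii) every right-nil `v₀` satisfies
`ω(⁅v₀,x⁆, y) + ω(x, ⁅v₀,y⁆) = 0`. -/
theorem stmt_9 {K L : Type*} [Field K] [LieRing L] [LieAlgebra K L]
    [FiniteDimensional K L]
    (α : Module.Dual K L) (ω : L → L → K)
    (hω : ∀ x y : L, ω x y = -α ⁅x, y⁆)
    (hnd : ∀ x : L, (∀ y : L, ω x y = 0) → x = 0)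
    (mul : L →ₗ[K] L →ₗ[K] L)
    (hmul : ∀ x y z : L, ω (mul x y) z = -ω y ⁅x, z⁆)
    (v₀ : L) :
    ((∀ x : L, mul x v₀ = x) →
        ∀ x y : L, ω ⁅v₀, x⁆ y + ω x ⁅v₀, y⁆ = -ω x y) ∧
      ((∀ x : L, mul x v₀ = 0) →
        ∀ x y : L, ω ⁅v₀, x⁆ y + ω x ⁅v₀, y⁆ = 0) := by
  have key : ∀ x y : L, ω ⁅v₀, x⁆ y + ω x ⁅v₀, y⁆ = ω v₀ ⁅x, y⁆ := by
    intro x y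
    rw [hω, hω, hω, show ⁅v₀, ⁅x, y⁆⁆ = ⁅⁅v₀, x⁆, y⁆ + ⁅x, ⁅v₀, y⁆⁆ from leibniz_lie v₀ x y,
      map_add]
    ring
  constructor
  · intro h x y
    have h1 := hmul x v₀ y
    rw [h x] at h1
    rw [key]
    linear_combination h1
  · intro h x y
    have h1 := hmul x v₀ y
    rw [h x] at h1
    have h0 : ω (0 : L) y = 0 := by simp [hω]
    rw [key]
    rw [h0] at h1
    linear_combination h1
end

section
/- Let K be a field of characteristic zero and (L, α) a Frobenius Lie algebra over K of dimension 2n with n ≥ 1, with form ω(x,y) = −α(⁅x,y⁆) and associated product * determined by ω(x*y,z) = −ω(y,⁅x,z⁆). If v₀ ∈ L is a right-unit (x*v₀ = x for all x), then trace(ad v₀) = −n; in particular, v₀ does not belong to the derived ideal ⁅L, L⁆. -/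
open LinearMap

-- trace of dualMap equals trace
lemma trace_dualMap_eq {K V : Type*} [Field K] [AddCommGroup V] [Module K V]
    [FiniteDimensional K V] (f : V →ₗ[K] V) :
    LinearMap.trace K (Module.Dual K V) f.dualMap = LinearMap.trace K V f := by
  classical
  let b := Module.finBasis K V
  rw [LinearMap.trace_eq_matrix_trace K b.dualBasis, LinearMap.trace_eq_matrix_trace K b,
    LinearMap.dualMap_def, LinearMap.toMatrix_transpose, Matrix.trace_transpose]



/-- In a Frobenius Lie algebra of dimension `2n` (`n ≥ 1`) over a field of
characteristic zero, every right-unit `v₀` satisfies `trace(ad v₀) = -n`; in particular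
`v₀` does not belong to the derived ideal `⁅L, L⁆`. -/
theorem stmt_10 {K L : Type*} [Field K] [CharZero K] [LieRing L] [LieAlgebra K L]
    [FiniteDimensional K L]
    (n : ℕ) (hn : 1 ≤ n) (hdim : Module.finrank K L = 2 * n)
    (α : Module.Dual K L) (ω : L → L → K)
    (hω : ∀ x y : L, ω x y = -α ⁅x, y⁆)
    (hnd : ∀ x : L, (∀ y : L, ω x y = 0) → x = 0)
    (mul : L →ₗ[K] L →ₗ[K] L)
    (hmul : ∀ x y z : L, ω (mul x y) z = -ω y ⁅x, z⁆)
    (v₀ : L) (hunit : ∀ x : L, mul x v₀ = x) :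
    LinearMap.trace K L (LieAlgebra.ad K L v₀) = -(n : K) ∧
      v₀ ∉ LieAlgebra.derivedSeries K L 1 := by
  classical
  set T : L →ₗ[K] L := LieAlgebra.ad K L v₀ with hT
  have hTapp : ∀ x : L, T x = ⁅v₀, x⁆ := fun x => rfl
  -- key relation 1
  have h1 : ∀ x y : L, α ⁅v₀, ⁅x, y⁆⁆ = -α ⁅x, y⁆ := by
    intro x y
    have := hmul x v₀ y
    rw [hunit x, hω x y, hω v₀ ⁅x, y⁆, neg_neg] at this
    exact this.symm
  -- key relation 2
  have h2 : ∀ x y : L, ω ⁅v₀, x⁆ y + ω x ⁅v₀, y⁆ = -ω x y := by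
    intro x y
    have hj : ⁅⁅v₀, x⁆, y⁆ = ⁅v₀, ⁅x, y⁆⁆ - ⁅x, ⁅v₀, y⁆⁆ := by
      rw [lie_lie]
    rw [hω, hω, hω, hj, map_sub]
    rw [h1 x y]
    ring
  -- the bilinear map B
  let B : L →ₗ[K] Module.Dual K L :=
    -((LinearMap.llcomp K L L K α) ∘ₗ (LieAlgebra.ad K L : L →ₗ[K] Module.End K L))
  have hBapp : ∀ x y : L, B x y = ω x y := by
    intro x y
    simp [B, hω, LieAlgebra.ad_apply]
  have hBinj : Function.Injective B := by
    rw [← LinearMap.ker_eq_bot, LinearMap.ker_eq_bot']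
    intro x hx
    refine hnd x fun y => ?_
    rw [← hBapp, hx]; rfl
  have hBbij : Function.Bijective B :=
    ⟨hBinj, (LinearMap.injective_iff_surjective_of_finrank_eq_finrank
      (Subspace.dual_finrank_eq (V := L)).symm).mp hBinj⟩
  let e : L ≃ₗ[K] Module.Dual K L := LinearEquiv.ofBijective B hBbij
  have heapp : ∀ x : L, e x = B x := fun x => rfl
  -- the dual map relation
  have hrel : ∀ x : L, T.dualMap (e x) = e (-x - T x) := by
    intro x
    apply LinearMap.ext
    intro y
    have h := h2 x y
    have lhs : T.dualMap (e x) y = ω x ⁅v₀, y⁆ := by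
      rw [LinearMap.dualMap_apply, heapp, hBapp, hTapp]
    have rhs : e (-x - T x) y = -ω x y - ω ⁅v₀, x⁆ y := by
      rw [heapp, map_sub, map_neg, LinearMap.sub_apply, LinearMap.neg_apply, hBapp, hBapp, hTapp]
    rw [lhs, rhs]
    linear_combination h
  have hdual : T.dualMap = (e.conj (-(LinearMap.id) - T) : Module.Dual K L →ₗ[K] Module.Dual K L) := by
    apply LinearMap.ext
    intro φ
    have : φ = e (e.symm φ) := (e.apply_symm_apply φ).symm
    rw [this, hrel]
    simp [LinearEquiv.conj_apply]
  -- trace computation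
  have h3 : LinearMap.trace K (Module.Dual K L) T.dualMap = LinearMap.trace K L T :=
    trace_dualMap_eq T
  rw [hdual, LinearMap.trace_conj', map_sub, map_neg, LinearMap.trace_id, hdim] at h3
  have htrace : LinearMap.trace K L T = -(n : K) := by
    have h2t : (2 : K) * LinearMap.trace K L T = (2 : K) * (-(n : K)) := by
      push_cast at h3
      linear_combination -h3
    exact mul_left_cancel₀ two_ne_zero h2t
  refine ⟨htrace, ?_⟩
  intro hv
  -- trace of ad vanishes on derived ideal
  have hzero : LinearMap.trace K L T = 0 := by
    rw [LieAlgebra.derivedSeries_def, LieAlgebra.derivedSeriesOfIdeal_succ,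
      LieAlgebra.derivedSeriesOfIdeal_zero, ← LieSubmodule.mem_toSubmodule,
      LieSubmodule.lieIdeal_oper_eq_linear_span] at hv
    have key : ∀ v ∈ Submodule.span K
        {m : L | ∃ (x : (⊤ : LieIdeal K L)) (nn : (⊤ : LieIdeal K L)), ⁅(x : L), (nn : L)⁆ = m},
        LinearMap.trace K L (LieAlgebra.ad K L v) = 0 := by
      intro v hvmem
      induction hvmem using Submodule.span_induction with
      | mem m hm =>
        obtain ⟨x, y, rfl⟩ := hm
        letI : LieRing (Module.End K L) := LieRing.ofAssociativeRing
        rw [LieHom.map_lie, Ring.lie_def, map_sub, LinearMap.trace_mul_comm, sub_self]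
      | zero => simp
      | add a b _ _ ha hb => rw [map_add, map_add, ha, hb, add_zero]
      | smul c a _ ha => rw [map_smul, map_smul, ha, smul_zero]
    exact key v₀ hv
  rw [htrace] at hzero
  have : (n : K) ≠ 0 := Nat.cast_ne_zero.mpr (by omega)
  exact this (neg_eq_zero.mp hzero)
end

section
/- A nontrivial Frobenius Lie algebra over a field of characteristic zero cannot be unimodular. Precisely: let K be a field of characteristic zero and L a nonzero finite-dimensional Lie algebra over K such that trace(ad x) = 0 for every x ∈ L. Then for every linear functional α ∈ L*, the bilinear form ω(x,y) := −α(⁅x,y⁆) is degenerate; equivalently, L admits no Frobenius functional. -/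
/-- A nontrivial unimodular Lie algebra over a field of characteristic zero
admits no Frobenius functional: for every `α`, the form `ω(x,y) = -α(⁅x,y⁆)` is
degenerate. -/
theorem stmt_11 {K L : Type*} [Field K] [CharZero K] [LieRing L] [LieAlgebra K L]
    [FiniteDimensional K L] [Nontrivial L]
    (huni : ∀ x : L, LinearMap.trace K L (LieAlgebra.ad K L x) = 0) :
    ∀ α : Module.Dual K L, ∃ x : L, x ≠ 0 ∧ ∀ y : L, -α ⁅x, y⁆ = 0 := by
  intro α
  by_contra h
  push_neg at h
  -- B x y = α ⁅x, y⁆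
  set B : L →ₗ[K] Module.Dual K L :=
    (LinearMap.llcomp K L L K α).comp (LieAlgebra.ad K L : L →ₗ[K] Module.End K L) with hB
  have hBapp : ∀ x y : L, B x y = α ⁅x, y⁆ := fun x y => rfl
  have hinj : Function.Injective B := by
    rw [← LinearMap.ker_eq_bot, Submodule.eq_bot_iff]
    intro x hx
    by_contra hx0
    obtain ⟨y, hy⟩ := h x hx0
    apply hy
    have : B x y = 0 := by rw [hx]; rfl
    rw [hBapp] at this
    rw [this, neg_zero]
  have hsurj : Function.Surjective B :=
    (LinearMap.injective_iff_surjective_of_finrank_eq_finrank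
      (Subspace.dual_finrank_eq).symm).mp hinj
  set e : L ≃ₗ[K] Module.Dual K L := LinearEquiv.ofBijective B ⟨hinj, hsurj⟩ with he
  obtain ⟨H, hH⟩ := hsurj α
  have hHapp : ∀ y : L, α ⁅H, y⁆ = α y := by
    intro y
    have := congrArg (fun φ : Module.Dual K L => φ y) hH
    simpa [hBapp] using this
  set A : Module.End K L := LieAlgebra.ad K L H with hA
  set C : Module.End K L := e.symm.conj (Module.Dual.transpose (R := K) A) with hC
  have hkey : A + C = LinearMap.id := by
    ext x
    apply e.injective
    have hCx : e (C x) = Module.Dual.transpose (R := K) A (e x) := by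
      rw [hC, LinearEquiv.symm_conj_apply]
      exact e.apply_symm_apply _
    have hex : ∀ z : L, e z = B z := fun z => rfl
    ext y
    have hle : α ⁅H, ⁅x, y⁆⁆ = α ⁅x, y⁆ := hHapp ⁅x, y⁆
    rw [leibniz_lie, map_add] at hle
    simp only [LinearMap.add_apply, map_add, LinearMap.id_coe, id_eq]
    rw [hCx]
    simp only [Module.Dual.transpose_apply, LinearMap.comp_apply, hex, hBapp]
    simpa [hA, LieAlgebra.ad_apply] using hle
  have htr := congrArg (LinearMap.trace K L) hkey
  have hCtr : LinearMap.trace K L C = LinearMap.trace K L A := by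
    rw [hC, LinearMap.trace_conj', LinearMap.trace_transpose']
  have hAtr : LinearMap.trace K L A = 0 := huni H
  rw [map_add, LinearMap.trace_id, hCtr, hAtr, add_zero] at htr
  have : (Module.finrank K L : K) = 0 := htr.symm
  have h0 : Module.finrank K L = 0 := Nat.cast_eq_zero.mp this
  exact absurd h0 (Module.finrank_pos (R := K) (M := L)).ne'
end

section
/- Let K be a field of characteristic zero and (L, ω) a quasi-Frobenius Lie algebra over K of dimension 2n. Then there exists an injective homomorphism of Lie algebras from L into sl(2n+1, K). In particular, every Frobenius Lie algebra of dimension 2n over K is isomorphic to a Lie subalgebra of sl(2n+1, K). -/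
set_option maxHeartbeats 1000000

/-- Every quasi-Frobenius Lie algebra of dimension `2n` over a field of
characteristic zero embeds as a Lie subalgebra of `sl(2n+1, K)`. -/
theorem stmt_13 {K L : Type*} [Field K] [CharZero K] [LieRing L] [LieAlgebra K L]
    [FiniteDimensional K L]
    (n : ℕ) (hdim : Module.finrank K L = 2 * n)
    (ω : L →ₗ[K] L →ₗ[K] K)
    (hskew : ∀ x y : L, ω x y = -ω y x)
    (hnd : ∀ x : L, (∀ y : L, ω x y = 0) → x = 0)
    (hclosed : ∀ x y z : L, ω ⁅x, y⁆ z + ω ⁅y, z⁆ x + ω ⁅z, x⁆ y = 0) :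
    ∃ f : L →ₗ⁅K⁆ (LieAlgebra.SpecialLinear.sl (Fin (2 * n + 1)) K),
      Function.Injective f := by
  classical
  letI : LieRing (Module.End K L) := LieRing.ofAssociativeRing
  letI : LieAlgebra K (Module.End K L) := LieAlgebra.ofAssociativeAlgebra
  set N := 2 * n + 1 with hN
  set χ : L →ₗ[K] K := (LinearMap.trace K L) ∘ₗ (LieAlgebra.ad K L : L →ₗ⁅K⁆ Module.End K L).toLinearMap with hχ
  have hNK : (N : K) ≠ 0 := Nat.cast_ne_zero.mpr (Nat.succ_ne_zero _)
  set c : L →ₗ[K] K := ((N : K)⁻¹) • χ with hc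
  have hχ_lie : ∀ x y : L, χ ⁅x, y⁆ = 0 := by
    intro x y
    have h : (LieAlgebra.ad K L) ⁅x, y⁆ = (LieAlgebra.ad K L x) * (LieAlgebra.ad K L y)
        - (LieAlgebra.ad K L y) * (LieAlgebra.ad K L x) := by
      rw [LieHom.map_lie]; rfl
    simp [hχ, h, map_sub, LinearMap.trace_mul_comm]
  have hc_lie : ∀ x y : L, c ⁅x, y⁆ = 0 := by
    intro x y; simp [hc, hχ_lie x y]
  have hco : ∀ x y v : L, ω ⁅x, y⁆ v = ω x ⁅y, v⁆ - ω y ⁅x, v⁆ := by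
    intro x y v
    have h := hclosed x y v
    have h1 : ω ⁅y, v⁆ x = - ω x ⁅y, v⁆ := hskew _ _
    have h2 : ω ⁅v, x⁆ y = - ω y ⁅v, x⁆ := hskew _ _
    have h3 : ⁅v, x⁆ = -⁅x, v⁆ := by rw [← lie_skew]
    rw [h1, h2, h3] at h
    simp only [map_neg, LinearMap.neg_apply, neg_neg] at h
    linear_combination h
  set ρ : L →ₗ[K] Module.End K (L × K) := LinearMap.mk₂ K
    (fun x p => (⁅x, p.1⁆ - c x • p.1, ω x p.1 - c x * p.2))
    (by intro x y p
        refine Prod.ext ?_ ?_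
        · simp only [add_lie, map_add, LinearMap.add_apply, add_smul, Prod.fst_add]
          abel
        · simp only [map_add, LinearMap.add_apply, add_mul, Prod.snd_add]
          ring)
    (by intro a x p
        refine Prod.ext ?_ ?_
        · simp only [smul_lie, map_smul, smul_eq_mul, Prod.smul_fst]
          module
        · simp only [map_smul, LinearMap.smul_apply, smul_eq_mul, Prod.smul_snd]
          ring)
    (by intro x p q
        refine Prod.ext ?_ ?_
        · simp only [Prod.fst_add, lie_add, smul_add, map_add]
          abel
        · simp only [Prod.fst_add, Prod.snd_add, map_add, mul_add]
          ring)
    (by intro a x p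
        refine Prod.ext ?_ ?_
        · simp only [Prod.smul_fst, lie_smul, Prod.smul_snd, smul_eq_mul]
          module
        · simp only [Prod.smul_fst, Prod.smul_snd, map_smul, smul_eq_mul]
          ring)
    with hρ
  have hρ_apply : ∀ x (p : L × K), ρ x p = (⁅x, p.1⁆ - c x • p.1, ω x p.1 - c x * p.2) := by
    intro x p; rfl
  have hρ_lie : ∀ x y : L, ρ ⁅x, y⁆ = ρ x * ρ y - ρ y * ρ x := by
    intro x y
    refine LinearMap.ext fun p => Prod.ext ?_ ?_
    · simp only [hρ_apply, LinearMap.sub_apply, Module.End.mul_apply, hρ_apply, hc_lie,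
        zero_smul, sub_zero, lie_sub, lie_lie, lie_smul, map_sub, map_smul, smul_sub,
        smul_smul, Prod.fst_sub, smul_eq_mul]
      module
    · simp only [hρ_apply, LinearMap.sub_apply, Module.End.mul_apply, hρ_apply, hc_lie,
        zero_mul, sub_zero, Prod.snd_sub, map_sub, map_smul, smul_eq_mul, hco x y p.1]
      ring
  have hρ_inj : ∀ x : L, ρ x = 0 → x = 0 := by
    intro x hx
    have h01 : ρ x (0, 1) = 0 := by rw [hx]; rfl
    have hcx : c x = 0 := by
      have h2 := congrArg Prod.snd h01
      simpa [hρ_apply] using h2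
    apply hnd
    intro y
    have hy : ρ x (y, 0) = 0 := by rw [hx]; rfl
    have h2 := congrArg Prod.snd hy
    simpa [hρ_apply, hcx] using h2
  have hfinrk : Module.finrank K (L × K) = N := by
    rw [Module.finrank_prod, hdim, Module.finrank_self]
  have hρ_tr : ∀ x : L, LinearMap.trace K (L × K) (ρ x) = 0 := by
    intro x
    have hdecomp : ρ x = LinearMap.prodMap ((LieAlgebra.ad K L) x) 0
        + (LinearMap.inr K L K ∘ₗ ω x ∘ₗ LinearMap.fst K L K)
        - c x • LinearMap.id := by
      refine LinearMap.ext fun p => Prod.ext ?_ ?_ <;>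
        simp [hρ_apply, LieAlgebra.ad_apply, sub_eq_add_neg]
    rw [hdecomp, map_sub, map_add, LinearMap.trace_prodMap', map_zero, add_zero]
    have htr2 : LinearMap.trace K (L × K)
        (LinearMap.inr K L K ∘ₗ ω x ∘ₗ LinearMap.fst K L K) = 0 := by
      rw [LinearMap.trace_comp_comm' (ω x ∘ₗ LinearMap.fst K L K) (LinearMap.inr K L K)]
      have hz : (ω x ∘ₗ LinearMap.fst K L K) ∘ₗ LinearMap.inr K L K = 0 := by
        refine LinearMap.ext fun t => ?_; simp
      rw [hz]; simp
    rw [htr2, add_zero, map_smul, LinearMap.trace_id, hfinrk, smul_eq_mul]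
    simp only [hc, LinearMap.smul_apply, smul_eq_mul, hχ, LinearMap.coe_comp,
      Function.comp_apply, LieHom.coe_toLinearMap]
    field_simp
    ring
  let b : Module.Basis (Fin N) K (L × K) :=
    (Module.finBasis K (L × K)).reindex (finCongr hfinrk)
  let E := LinearMap.toMatrixAlgEquiv b
  have hmem : ∀ x : L, E (ρ x) ∈ LieAlgebra.SpecialLinear.sl (Fin N) K := by
    intro x
    have : Matrix.trace (E (ρ x)) = 0 := by
      rw [show (E (ρ x)) = LinearMap.toMatrix b b (ρ x) from rfl,
        ← LinearMap.trace_eq_matrix_trace]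
      exact hρ_tr x
    exact this
  set f : L →ₗ⁅K⁆ (LieAlgebra.SpecialLinear.sl (Fin N) K) :=
    { toFun := fun x => ⟨E (ρ x), hmem x⟩
      map_add' := by intro x y; ext : 1; simp
      map_smul' := by intro a x; ext : 1; simp
      map_lie' := by
        intro x y
        ext : 1
        show E (ρ ⁅x, y⁆) = _
        rw [hρ_lie]
        simp only [map_sub, map_mul]
        rfl } with hf
  refine ⟨f, ?_⟩
  have hker : ∀ x : L, f x = 0 → x = 0 := by
    intro x hx
    apply hρ_inj
    have hval : E (ρ x) = 0 := by
      have h2 := congrArg Subtype.val hx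
      simpa [hf] using h2
    exact E.injective (by simpa using hval)
  intro a b hab
  have : f (a - b) = 0 := by
    rw [map_sub, hab, sub_self]
  exact sub_eq_zero.mp (hker _ this)
end

section
/- Let L be a finite-dimensional complex Lie algebra with trivial center in which every derivation is inner, i.e., for every linear map D : L → L satisfying D⁅x,y⁆ = ⁅D x, y⁆ + ⁅x, D y⁆ there exists a ∈ L with D = ad a. Then every element of L admits a Jordan–Chevalley decomposition in L: for every x ∈ L there exist s, n ∈ L with x = s + n, ⁅s, n⁆ = 0, the endomorphism ad s of L semisimple, and the endomorphism ad n of L nilpotent. -/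
open Module.End LieAlgebra

/-- In a finite-dimensional complex Lie algebra with trivial center in which
every derivation is inner, every element admits a Jordan–Chevalley decomposition: `x = s + n`
with `⁅s, n⁆ = 0`, `ad s` semisimple (every invariant subspace has an invariant complement)
and `ad n` nilpotent. -/
theorem stmt_14 {L : Type*} [LieRing L] [LieAlgebra ℂ L] [FiniteDimensional ℂ L]
    (hcenter : ∀ z : L, (∀ y : L, ⁅z, y⁆ = 0) → z = 0)
    (hder : ∀ D : L →ₗ[ℂ] L, (∀ x y : L, D ⁅x, y⁆ = ⁅D x, y⁆ + ⁅x, D y⁆) →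
      ∃ a : L, ∀ x : L, D x = ⁅a, x⁆) :
    ∀ x : L, ∃ s n : L, x = s + n ∧ ⁅s, n⁆ = 0 ∧
      (∀ p : Submodule ℂ L, (∀ v ∈ p, ⁅s, v⁆ ∈ p) →
        ∃ q : Submodule ℂ L, (∀ v ∈ q, ⁅s, v⁆ ∈ q) ∧ IsCompl p q) ∧
      IsNilpotent (LieAlgebra.ad ℂ L n) := by
  intro x
  set f : Module.End ℂ L := ad ℂ L x with hf
  obtain ⟨N, hNmem, S, hSmem, hN, hS, hSN⟩ := f.exists_isNilpotent_isSemisimple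
  have hcomm : Commute f S := Algebra.commute_of_mem_adjoin_self hSmem
  have hfS : IsNilpotent (f - S) := by rwa [eq_sub_of_add_eq hSN.symm] at hN
  -- `S` acts as scalar `μ` on each generalised eigenspace of `f`.
  have aux : ∀ (μ : ℂ) (y : L), y ∈ f.maxGenEigenspace μ → S y = μ • y := by
    intro μ y hy
    rw [maxGenEigenspace_eq] at hy
    exact apply_eq_of_mem_of_comm_of_isFinitelySemisimple_of_isNil hy hcomm
      hS.isFinitelySemisimple hfS
  -- `f = ad x`, so generalised eigenspaces satisfy `⁅E_μ, E_ν⁆ ⊆ E_{μ+ν}`, hence `S` is a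
  -- derivation.
  have h_der : ∀ y z : L, S ⁅y, z⁆ = ⁅S y, z⁆ + ⁅y, S z⁆ := by
    have key : ∀ (μ ν : ℂ) (y z : L), y ∈ f.maxGenEigenspace μ → z ∈ f.maxGenEigenspace ν →
        S ⁅y, z⁆ = ⁅S y, z⁆ + ⁅y, S z⁆ := by
      intro μ ν y z hy hz
      have hyz : ⁅y, z⁆ ∈ f.maxGenEigenspace (μ + ν) :=
        LieModule.lie_mem_maxGenEigenspace_toEnd (χ₁ := μ) (χ₂ := ν) hy hz
      rw [aux _ _ hy, aux _ _ hz, aux _ _ hyz, smul_lie, lie_smul, ← add_smul]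
    intro y z
    have htop : ⨆ μ : ℂ, f.maxGenEigenspace μ = ⊤ := f.iSup_maxGenEigenspace_eq_top
    have hy : y ∈ ⨆ μ : ℂ, f.maxGenEigenspace μ := htop ▸ Submodule.mem_top
    have hz : z ∈ ⨆ μ : ℂ, f.maxGenEigenspace μ := htop ▸ Submodule.mem_top
    induction hy using Submodule.iSup_induction' with
    | mem μ y hy =>
      induction hz using Submodule.iSup_induction' with
      | mem ν z hz => exact key μ ν y z hy hz
      | zero => simp
      | add _ _ _ _ h h' => simp only [lie_add, map_add, h, h']; abel
    | zero => simp
    | add _ _ _ _ h h' => simp only [add_lie, map_add, h, h']; abel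
  -- `S` is inner: `S = ad s`.
  obtain ⟨s, hs⟩ := hder S h_der
  have hadS : ad ℂ L s = S := by ext y; simp [ad_apply, (hs y).symm]
  -- Set `n := x - s`; then `ad n = f - S = N` is nilpotent.
  refine ⟨s, x - s, by abel, ?_, ?_, ?_⟩
  · -- `⁅s, n⁆ = 0`
    apply hcenter
    intro y
    have hc : Commute S (f - S) := hcomm.symm.sub_right (Commute.refl S)
    have : ad ℂ L ⁅s, x - s⁆ = 0 := by
      have h2 : ad ℂ L (x - s) = f - S := by rw [map_sub, hadS, hf]
      letI : LieRing (Module.End ℂ L) := LieRing.ofAssociativeRing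
      rw [(ad ℂ L).map_lie, hadS, h2, Ring.lie_def, hc.eq, sub_self]
    simpa [ad_apply] using LinearMap.congr_fun this y
  · -- semisimplicity of `ad s`
    intro p hp
    have hp' : p ∈ S.invtSubmodule := by
      rw [Module.End.mem_invtSubmodule]
      intro v hv
      have := hp v hv
      rw [← hs v] at this
      exact this
    obtain ⟨q, hq, hcompl⟩ := Module.End.isSemisimple_iff.mp hS p hp'
    rw [Module.End.mem_invtSubmodule] at hq
    refine ⟨q, fun v hv => ?_, hcompl⟩
    have := hq hv
    rw [Submodule.mem_comap, hs v] at this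
    exact this
  · -- nilpotency of `ad n`
    have : ad ℂ L (x - s) = f - S := by rw [map_sub, hadS, hf]
    rw [this]
    exact hfS
end

section
/- Let K be a field, H a Lie algebra over K, and L a Lie ideal of H such that L has trivial center and every derivation of L is inner (every linear map D : L → L with D⁅x,y⁆ = ⁅D x, y⁆ + ⁅x, D y⁆ equals ad a for some a ∈ L). Then there exists a Lie ideal C of H such that L ∩ C = 0 and L + C = H; that is, H decomposes as a direct sum of the ideals L and C. (This applies in particular when L is a Frobenius Lie algebra with every derivation inner, realized as an ideal of a larger Lie algebra H.) -/
/-- If `L` is a Lie ideal of `H` with trivial center all of whose derivations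
are inner, then `H` is the direct sum of the ideal `L` and a complementary ideal `C`. -/
theorem stmt_15 {K H : Type*} [Field K] [LieRing H] [LieAlgebra K H]
    (L : LieIdeal K H)
    (hcenter : ∀ z ∈ L, (∀ y ∈ L, ⁅z, y⁆ = 0) → z = 0)
    (hder : ∀ D : ↥L →ₗ[K] ↥L, (∀ x y : ↥L, D ⁅x, y⁆ = ⁅D x, y⁆ + ⁅x, D y⁆) →
      ∃ a : ↥L, ∀ x : ↥L, D x = ⁅a, x⁆) :
    ∃ C : LieIdeal K H, L ⊓ C = ⊥ ∧ L ⊔ C = ⊤ := by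
  -- C = centralizer of L in H
  refine ⟨{ carrier := {h | ∀ x ∈ L, ⁅h, x⁆ = 0}
            add_mem' := ?_
            zero_mem' := ?_
            smul_mem' := ?_
            lie_mem := ?_ }, ?_, ?_⟩
  · intro a b ha hb x hx
    simp only [Set.mem_setOf_eq] at *
    rw [add_lie, ha x hx, hb x hx, add_zero]
  · intro x hx; simp
  · intro c a ha x hx
    simp only [Set.mem_setOf_eq] at *
    rw [smul_lie, ha x hx, smul_zero]
  · intro g c hc x hx
    simp only [Set.mem_setOf_eq] at *
    rw [lie_lie, hc x hx, lie_zero, zero_sub, hc ⁅g, x⁆ (L.lie_mem hx), neg_zero]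
  · -- L ⊓ C = ⊥
    rw [eq_bot_iff]
    intro z hz
    rcases hz with ⟨hzL, hzC⟩
    have : z = 0 := hcenter z hzL (fun y hy => hzC y hy)
    simp [this]
  · -- L ⊔ C = ⊤
    rw [eq_top_iff]
    intro h _
    -- define the derivation D = ad h restricted to L
    set D : ↥L →ₗ[K] ↥L :=
      { toFun := fun x => ⟨⁅h, (x : H)⁆, L.lie_mem x.2⟩
        map_add' := fun x y => by ext; simp [lie_add]
        map_smul' := fun c x => by ext; simp [lie_smul] } with hD
    have hDder : ∀ x y : ↥L, D ⁅x, y⁆ = ⁅D x, y⁆ + ⁅x, D y⁆ := by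
      intro x y
      ext
      show ⁅h, ⁅(x : H), (y : H)⁆⁆ = ⁅⁅h, (x : H)⁆, (y : H)⁆ + ⁅(x : H), ⁅h, (y : H)⁆⁆
      rw [leibniz_lie]
    obtain ⟨a, ha⟩ := hder D hDder
    have key : ∀ x ∈ L, ⁅h - (a : H), x⁆ = 0 := by
      intro x hx
      have := ha ⟨x, hx⟩
      have h1 : ⁅h, x⁆ = ⁅(a : H), x⁆ := congrArg Subtype.val this
      rw [sub_lie, h1, sub_self]
    have : h = (a : H) + (h - (a : H)) := by abel
    rw [this]
    exact add_mem (le_sup_left (α := LieIdeal K H) a.2)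
      (le_sup_right (α := LieIdeal K H) key)
end

section
/- Let (L, α) be a finite-dimensional complex Frobenius Lie algebra in which every derivation is inner (every linear map D : L → L with D⁅x,y⁆ = ⁅D x, y⁆ + ⁅x, D y⁆ equals ad a for some a ∈ L). Then the adjoint operator ad x₀ of the principal element x₀ is a semisimple endomorphism of L, i.e., every ad x₀-invariant subspace of L admits an ad x₀-invariant complement. -/
open Module.End


/-- In a finite-dimensional complex Frobenius Lie algebra in which every
derivation is inner, the adjoint operator of the principal element `x₀` is semisimple:
every `ad x₀`-invariant subspace has an `ad x₀`-invariant complement. -/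
theorem stmt_16 {L : Type*} [LieRing L] [LieAlgebra ℂ L] [FiniteDimensional ℂ L]
    (α : Module.Dual ℂ L) (ω : L → L → ℂ)
    (hω : ∀ x y : L, ω x y = -α ⁅x, y⁆)
    (hnd : ∀ x : L, (∀ y : L, ω x y = 0) → x = 0)
    (x₀ : L) (hx₀ : ∀ y : L, ω x₀ y = α y)
    (hder : ∀ D : L →ₗ[ℂ] L, (∀ x y : L, D ⁅x, y⁆ = ⁅D x, y⁆ + ⁅x, D y⁆) →
      ∃ a : L, ∀ x : L, D x = ⁅a, x⁆) :
    ∀ p : Submodule ℂ L, (∀ v ∈ p, ⁅x₀, v⁆ ∈ p) →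
      ∃ q : Submodule ℂ L, (∀ v ∈ q, ⁅x₀, v⁆ ∈ q) ∧ IsCompl p q := by
  classical
  intro p hp
  set T : Module.End ℂ L := LieModule.toEnd ℂ L L x₀ with hTdef
  have hTapp : ∀ y : L, T y = ⁅x₀, y⁆ := fun y => rfl
  -- α ∘ T = -α
  have hαT : ∀ y : L, α ⁅x₀, y⁆ = -α y := by
    intro y
    have h1 := hx₀ y
    rw [hω] at h1
    linear_combination -h1
  -- Jordan-Chevalley decomposition of T
  obtain ⟨N, hN₀, S, hS₀, hN, hS, hSN⟩ := T.exists_isNilpotent_isSemisimple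
  have hcomm : Commute T S := Algebra.commute_of_mem_adjoin_self hS₀
  rw [eq_sub_of_add_eq hSN.symm] at hN
  -- S acts as μ on the μ-generalized eigenspace of T
  have aux : ∀ (μ : ℂ) (y : L), y ∈ T.maxGenEigenspace μ → S y = μ • y := by
    intro μ y hy
    exact apply_eq_of_mem_of_comm_of_isFinitelySemisimple_of_isNil hy hcomm
      hS.isFinitelySemisimple hN
  have htop : ⨆ μ : ℂ, T.maxGenEigenspace μ = ⊤ := T.iSup_maxGenEigenspace_eq_top
  -- S is a derivation
  have h_der : ∀ y z : L, S ⁅y, z⁆ = ⁅S y, z⁆ + ⁅y, S z⁆ := by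
    have key : ∀ (μ ν : ℂ) (y z : L), y ∈ T.maxGenEigenspace μ → z ∈ T.maxGenEigenspace ν →
        S ⁅y, z⁆ = ⁅S y, z⁆ + ⁅y, S z⁆ := by
      intro μ ν y z hy hz
      have hyz : ⁅y, z⁆ ∈ T.maxGenEigenspace (μ + ν) :=
        LieModule.lie_mem_maxGenEigenspace_toEnd hy hz
      rw [aux μ y hy, aux ν z hz, aux (μ + ν) _ hyz, smul_lie, lie_smul, ← add_smul]
    intro y z
    have hy : y ∈ ⨆ μ : ℂ, T.maxGenEigenspace μ := htop ▸ Submodule.mem_top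
    have hz : z ∈ ⨆ μ : ℂ, T.maxGenEigenspace μ := htop ▸ Submodule.mem_top
    induction hy using Submodule.iSup_induction' with
    | mem μ y hy =>
      induction hz using Submodule.iSup_induction' with
      | mem ν z hz => exact key μ ν y z hy hz
      | zero => simp
      | add _ _ _ _ h h' => simp only [lie_add, map_add, h, h']; abel
    | zero => simp
    | add _ _ _ _ h h' => simp only [add_lie, map_add, h, h']; abel
  -- S is inner
  obtain ⟨a, ha⟩ := hder S h_der
  -- α ∘ S = -α
  have hαS : ∀ y : L, α (S y) = -α y := by
    have key : ∀ (μ : ℂ) (y : L), y ∈ T.maxGenEigenspace μ → α (S y) = -α y := by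
      intro μ y hy
      rw [aux μ y hy, map_smul]
      rcases eq_or_ne μ (-1) with hμ | hμ
      · rw [hμ, neg_smul, one_smul]
      · -- show α y = 0
        suffices hy0 : α y = 0 by rw [hy0, smul_zero, neg_zero]
        -- T + 1 maps the generalized eigenspace to itself
        have hmapsT : ∀ x ∈ T.maxGenEigenspace μ, (T + 1) x ∈ T.maxGenEigenspace μ := by
          intro x hx
          exact mapsTo_maxGenEigenspace_of_comm (Commute.add_right rfl (Commute.one_right T)) μ hx
        have hmapsNil : ∀ x ∈ T.maxGenEigenspace μ, (T - μ • 1) x ∈ T.maxGenEigenspace μ := by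
          intro x hx
          have hc : Commute T (T - μ • 1) :=
            Commute.sub_right rfl (Commute.smul_right (Commute.one_right T) μ)
          exact mapsTo_maxGenEigenspace_of_comm hc μ hx
        have hnil : IsNilpotent ((T - μ • 1).restrict hmapsNil) := by
          refine ⟨maxGenEigenspaceIndex T μ, ?_⟩
          rw [Module.End.pow_restrict]
          ext ⟨x, hx⟩
          rw [maxGenEigenspace_eq, mem_genEigenspace_nat] at hx
          simpa using hx
        have hμ1 : IsUnit ((μ + 1) : ℂ) := by
          simp only [isUnit_iff_ne_zero]
          intro h; apply hμ; linear_combination h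
        have hrw : (T + 1).restrict hmapsT
            = algebraMap ℂ (Module.End ℂ (T.maxGenEigenspace μ)) (μ + 1)
              + (T - μ • 1).restrict hmapsNil := by
          rw [Algebra.algebraMap_eq_smul_one]
          ext ⟨x, hx⟩
          simp only [LinearMap.restrict_coe_apply, LinearMap.add_apply, Module.End.one_apply,
            LinearMap.sub_apply, LinearMap.smul_apply, Submodule.coe_add, Submodule.coe_smul,
            SetLike.val_smul]
          module
        have hunit : IsUnit ((T + 1).restrict hmapsT) := by
          rw [hrw]
          exact IsNilpotent.isUnit_add_left_of_commute hnil
            (hμ1.map (algebraMap ℂ (Module.End ℂ (T.maxGenEigenspace μ))))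
            (Algebra.commute_algebraMap_right (μ + 1) _)
        set g := (T + 1).restrict hmapsT with hg
        set z : T.maxGenEigenspace μ := (↑hunit.unit⁻¹ : Module.End ℂ (T.maxGenEigenspace μ)) ⟨y, hy⟩ with hzdef
        have hgz : g z = ⟨y, hy⟩ := by
          have h1 : (↑hunit.unit : Module.End ℂ (T.maxGenEigenspace μ)) = g := hunit.unit_spec
          calc g z = ((↑hunit.unit : Module.End ℂ (T.maxGenEigenspace μ))
                * (↑hunit.unit⁻¹ : Module.End ℂ (T.maxGenEigenspace μ))) ⟨y, hy⟩ := by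
                rw [h1]; rfl
            _ = ⟨y, hy⟩ := by rw [Units.mul_inv]; rfl
        have hTz : (T + 1) (z : L) = y := by
          have := congrArg (Subtype.val) hgz
          rwa [hg, LinearMap.restrict_coe_apply] at this
        have : α ((T + 1) (z : L)) = 0 := by
          simp only [LinearMap.add_apply, Module.End.one_apply, map_add]
          rw [hTapp, hαT]
          ring
        rw [hTz] at this
        exact this
    intro y
    have hy : y ∈ ⨆ μ : ℂ, T.maxGenEigenspace μ := htop ▸ Submodule.mem_top
    induction hy using Submodule.iSup_induction' with
    | mem μ y hy => exact key μ y hy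
    | zero => simp
    | add _ _ _ _ h h' => simp only [map_add, h, h']; ring
  -- x₀ = a
  have hxa : x₀ = a := by
    have : x₀ - a = 0 := by
      apply hnd
      intro y
      rw [hω, sub_lie, map_sub]
      rw [hαT y, ← ha y, hαS y]
      ring
    exact eq_of_sub_eq_zero this
  -- conclude
  have hTS : T = S := by
    ext y
    rw [hTapp, ha, hxa]
  rw [← hTS] at hS
  rw [Module.End.isSemisimple_iff] at hS
  obtain ⟨q, hq1, hq2⟩ := hS p (fun v hv => hp v hv)
  exact ⟨q, fun v hv => hq1 hv, hq2⟩
end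

section
/- Let K be a field of characteristic zero, n ≥ 1, and let A ⊆ gl(n+1, K) be the Lie subalgebra of (n+1)×(n+1) matrices whose last row is zero (this is the Lie algebra aff(n,K) of the group of affine motions of Kⁿ, isomorphic to the semidirect product gl(n,K) ⋉ Kⁿ). Then every derivation of A is inner: for every linear map D : A → A satisfying D⁅X,Y⁆ = ⁅D X, Y⁆ + ⁅X, D Y⁆ for all X, Y ∈ A, there exists V ∈ A such that D X = ⁅V, X⁆ for all X ∈ A. -/
attribute [local instance 100] LieRing.ofAssociativeRing

def affLieSubalgebra (K : Type*) [Field K] (n : ℕ) :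
    LieSubalgebra K (Matrix (Fin (n + 1)) (Fin (n + 1)) K) where
  carrier := {M | ∀ j, M (Fin.last n) j = 0}
  add_mem' := by
    intro a b ha hb j
    simp only [Matrix.add_apply, ha j, hb j, add_zero]
  zero_mem' := by intro j; simp
  smul_mem' := by
    intro c a ha j
    simp only [Matrix.smul_apply, ha j, smul_zero]
  lie_mem' := by
    intro x y hx hy
    replace hx : ∀ j, x (Fin.last n) j = 0 := hx
    replace hy : ∀ j, y (Fin.last n) j = 0 := hy
    intro j
    rw [Ring.lie_def]
    simp [Matrix.sub_apply, Matrix.mul_apply, hx, hy]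

section Aux
variable {K : Type*} [Field K] {n : ℕ}

lemma aff_lastRow (X : ↥(affLieSubalgebra K n)) (j : Fin (n+1)) :
    (X : Matrix (Fin (n+1)) (Fin (n+1)) K) (Fin.last n) j = 0 := X.2 j

def affE (K : Type*) [Field K] (n : ℕ) (j : Fin (n+1)) : ↥(affLieSubalgebra K n) :=
  if h : j = Fin.last n then 0 else
    ⟨Matrix.single j (Fin.last n) 1, fun k => by
      simp [Matrix.single, h]⟩

lemma affE_val {j : Fin (n+1)} (h : j ≠ Fin.last n) :
    ((affE K n j) : Matrix (Fin (n+1)) (Fin (n+1)) K)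
      = Matrix.single j (Fin.last n) 1 := by
  rw [affE, dif_neg h]

def affH (K : Type*) [Field K] (n : ℕ) : ↥(affLieSubalgebra K n) :=
  ⟨1 - Matrix.single (Fin.last n) (Fin.last n) 1, fun k => by
    by_cases hk : k = Fin.last n <;>
      simp [Matrix.single, Matrix.one_apply, hk]⟩

lemma lie_apply_tcol (M N : Matrix (Fin (n+1)) (Fin (n+1)) K)
    (hM : ∀ j, M (Fin.last n) j = 0)
    (hN : ∀ i k, k ≠ Fin.last n → N i k = 0) (i k : Fin (n+1)) :
    ⁅M, N⁆ i k = if k = Fin.last n then ∑ p, M i p * N p (Fin.last n) else 0 := by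
  rw [Ring.lie_def]
  have h1 : (N * M) i k = 0 := by
    rw [Matrix.mul_apply]
    refine Finset.sum_eq_zero fun p _ => ?_
    by_cases hp : p = Fin.last n
    · rw [hp, hM, mul_zero]
    · rw [hN i p hp, zero_mul]
  rw [Matrix.sub_apply, h1, sub_zero, Matrix.mul_apply]
  by_cases hk : k = Fin.last n
  · rw [if_pos hk, hk]
  · rw [if_neg hk]
    exact Finset.sum_eq_zero fun p _ => by rw [hN p k hk, mul_zero]

lemma lie_E_apply (M : Matrix (Fin (n+1)) (Fin (n+1)) K)
    (hM : ∀ j, M (Fin.last n) j = 0) {j : Fin (n+1)} (hj : j ≠ Fin.last n)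
    (i k : Fin (n+1)) :
    ⁅M, Matrix.single j (Fin.last n) (1:K)⁆ i k
      = if k = Fin.last n then M i j else 0 := by
  rw [lie_apply_tcol M _ hM (fun i k hk => by simp [Matrix.single, Ne.symm hk])]
  by_cases hk : k = Fin.last n <;> simp [hk, Matrix.single, Finset.sum_ite_eq]

lemma lie_H_apply (M : Matrix (Fin (n+1)) (Fin (n+1)) K)
    (hM : ∀ j, M (Fin.last n) j = 0) (i k : Fin (n+1)) :
    ⁅((affH K n) : Matrix (Fin (n+1)) (Fin (n+1)) K), M⁆ i k
      = if k = Fin.last n then M i (Fin.last n) else 0 := by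
  have h : ⁅((affH K n) : Matrix (Fin (n+1)) (Fin (n+1)) K), M⁆
      = ⁅M, Matrix.single (Fin.last n) (Fin.last n) (1:K)⁆ := by
    show ⁅1 - Matrix.single (Fin.last n) (Fin.last n) (1:K), M⁆ = _
    rw [Ring.lie_def, Ring.lie_def]
    noncomm_ring
  rw [h, lie_apply_tcol M _ hM (fun i k hk => by simp [Matrix.single, Ne.symm hk])]
  by_cases hk : k = Fin.last n <;> simp [hk, Matrix.single, Finset.sum_ite_eq]

end Aux

section Aux2
variable {K : Type*} [Field K] {n : ℕ}

lemma t_decomp (T : ↥(affLieSubalgebra K n))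
    (hT : ∀ i k, k ≠ Fin.last n → (T : Matrix (Fin (n+1)) (Fin (n+1)) K) i k = 0) :
    T = ∑ j : Fin (n+1),
      ((T : Matrix (Fin (n+1)) (Fin (n+1)) K) j (Fin.last n)) • affE K n j := by
  have hcoe : ((∑ j : Fin (n + 1),
      ((T : Matrix (Fin (n+1)) (Fin (n+1)) K) j (Fin.last n)) • affE K n j :
        ↥(affLieSubalgebra K n)) : Matrix (Fin (n+1)) (Fin (n+1)) K)
      = ∑ j : Fin (n + 1), ((T : Matrix (Fin (n+1)) (Fin (n+1)) K) j (Fin.last n))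
          • (affE K n j : Matrix (Fin (n+1)) (Fin (n+1)) K) := by
    rw [AddSubmonoidClass.coe_finset_sum]
    exact Finset.sum_congr rfl fun j _ => rfl
  apply Subtype.ext
  rw [hcoe]
  funext i k
  rw [Matrix.sum_apply]
  rw [Finset.sum_eq_single i]
  · by_cases hi : i = Fin.last n
    · subst hi
      simp [affE, aff_lastRow]
    · rw [affE_val hi, Matrix.smul_apply]
      by_cases hk : k = Fin.last n
      · subst hk; simp [Matrix.single]
      · rw [hT i k hk]
        simp only [Matrix.single, Matrix.of_apply, smul_eq_mul, mul_ite, mul_one,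
          mul_zero]
        rw [if_neg (fun h : True ∧ Fin.last n = k => hk h.2.symm)]
  · intro b _ hb
    by_cases hbl : b = Fin.last n
    · subst hbl; simp [affE]
    · rw [affE_val hbl, Matrix.smul_apply]
      simp [Matrix.single, fun h : b = i => hb h]
  · intro h
    exact absurd (Finset.mem_univ i) h

def affV (K : Type*) [Field K] (n : ℕ)
    (D : ↥(affLieSubalgebra K n) →ₗ[K] ↥(affLieSubalgebra K n)) :
    ↥(affLieSubalgebra K n) :=
  ⟨Matrix.of fun i j =>
      if i = Fin.last n then 0
      else if j = Fin.last n then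
        -((D (affH K n) : Matrix (Fin (n+1)) (Fin (n+1)) K) i (Fin.last n))
      else (D (affE K n j) : Matrix (Fin (n+1)) (Fin (n+1)) K) i (Fin.last n),
    fun j => by simp⟩

lemma affV_val (D : ↥(affLieSubalgebra K n) →ₗ[K] ↥(affLieSubalgebra K n))
    (i j : Fin (n+1)) :
    (affV K n D : Matrix (Fin (n+1)) (Fin (n+1)) K) i j
      = if i = Fin.last n then 0
        else if j = Fin.last n then
          -((D (affH K n) : Matrix (Fin (n+1)) (Fin (n+1)) K) i (Fin.last n))
        else (D (affE K n j) : Matrix (Fin (n+1)) (Fin (n+1)) K) i (Fin.last n) := rfl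

end Aux2

/-- Every derivation of the Lie algebra `aff(n, K)` of affine motions of
`Kⁿ` (realized as the `(n+1)×(n+1)` matrices with last row zero) is inner. -/
theorem stmt_17 {K : Type*} [Field K] [CharZero K] (n : ℕ) (hn : 1 ≤ n)
    (D : ↥(affLieSubalgebra K n) →ₗ[K] ↥(affLieSubalgebra K n))
    (hD : ∀ X Y : ↥(affLieSubalgebra K n), D ⁅X, Y⁆ = ⁅D X, Y⁆ + ⁅X, D Y⁆) :
    ∃ V : ↥(affLieSubalgebra K n), ∀ X : ↥(affLieSubalgebra K n), D X = ⁅V, X⁆ := by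
  classical
  -- the fundamental equation on basis translations
  have key : ∀ j, j ≠ Fin.last n →
      D (affE K n j) = ⁅D (affH K n), affE K n j⁆ + ⁅affH K n, D (affE K n j)⁆ := by
    intro j hj
    have hbr : ⁅affH K n, affE K n j⁆ = affE K n j := by
      apply Subtype.ext
      funext i k
      rw [LieSubalgebra.coe_bracket, lie_H_apply _ (aff_lastRow _), affE_val hj]
      by_cases hk : k = Fin.last n
      · subst hk; rw [if_pos rfl]
      · rw [if_neg hk]
        simp only [Matrix.single, Matrix.of_apply]
        rw [if_neg (fun h : j = i ∧ Fin.last n = k => hk h.2.symm)]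
    have h := hD (affH K n) (affE K n j)
    rwa [hbr] at h
  have keyv : ∀ j, j ≠ Fin.last n → ∀ i k,
      (D (affE K n j) : Matrix (Fin (n+1)) (Fin (n+1)) K) i k
        = (if k = Fin.last n
            then (D (affH K n) : Matrix (Fin (n+1)) (Fin (n+1)) K) i j else 0)
          + (if k = Fin.last n
            then (D (affE K n j) : Matrix (Fin (n+1)) (Fin (n+1)) K) i (Fin.last n) else 0) := by
    intro j hj i k
    have h := congrFun (congrFun (congrArg Subtype.val (key j hj)) i) k
    simp only [AddMemClass.coe_add, LieSubalgebra.coe_bracket, Matrix.add_apply,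
      Pi.add_apply] at h
    rw [affE_val hj, lie_E_apply _ (aff_lastRow _) hj,
      lie_H_apply _ (aff_lastRow _)] at h
    exact h
  have hDH : ∀ i j, j ≠ Fin.last n →
      (D (affH K n) : Matrix (Fin (n+1)) (Fin (n+1)) K) i j = 0 := by
    intro i j hj
    have h := keyv j hj i (Fin.last n)
    rw [if_pos rfl, if_pos rfl] at h
    exact (right_eq_add.mp h)
  have hDE : ∀ j, j ≠ Fin.last n → ∀ i k, k ≠ Fin.last n →
      (D (affE K n j) : Matrix (Fin (n+1)) (Fin (n+1)) K) i k = 0 := by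
    intro j hj i k hk
    have h := keyv j hj i k
    rw [if_neg hk, if_neg hk, add_zero] at h
    exact h
  -- D agrees with ad V on basis translations
  have hVE : ∀ j, j ≠ Fin.last n → D (affE K n j) = ⁅affV K n D, affE K n j⁆ := by
    intro j hj
    apply Subtype.ext
    funext i k
    rw [LieSubalgebra.coe_bracket, affE_val hj, lie_E_apply _ (aff_lastRow _) hj]
    by_cases hk : k = Fin.last n
    · subst hk
      rw [if_pos rfl, affV_val]
      by_cases hi : i = Fin.last n
      · subst hi; rw [if_pos rfl, aff_lastRow]
      · rw [if_neg hi, if_neg hj]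
    · rw [if_neg hk, hDE j hj i k hk]
  -- D agrees with ad V on the "linear" part
  have Gcase : ∀ G : ↥(affLieSubalgebra K n),
      (∀ i, (G : Matrix (Fin (n+1)) (Fin (n+1)) K) i (Fin.last n) = 0) →
      D G = ⁅affV K n D, G⁆ := by
    intro G hG
    have hHG : ⁅affH K n, G⁆ = 0 := by
      apply Subtype.ext
      funext i k
      rw [LieSubalgebra.coe_bracket, lie_H_apply _ (aff_lastRow _)]
      simp [hG i]
    have h0 := hD (affH K n) G
    rw [hHG, map_zero] at h0
    have hlastcol : ∀ i, (D G : Matrix (Fin (n+1)) (Fin (n+1)) K) i (Fin.last n)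
        = ∑ p, (G : Matrix (Fin (n+1)) (Fin (n+1)) K) i p
            * (D (affH K n) : Matrix (Fin (n+1)) (Fin (n+1)) K) p (Fin.last n) := by
      intro i
      have h := congrFun (congrFun (congrArg Subtype.val h0) i) (Fin.last n)
      simp only [AddMemClass.coe_add, LieSubalgebra.coe_bracket, Matrix.add_apply,
        Pi.add_apply, ZeroMemClass.coe_zero, Matrix.zero_apply, Pi.zero_apply] at h
      rw [lie_H_apply _ (aff_lastRow _), if_pos rfl] at h
      have e1 : ⁅(D (affH K n) : Matrix (Fin (n+1)) (Fin (n+1)) K),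
          (G : Matrix (Fin (n+1)) (Fin (n+1)) K)⁆ i (Fin.last n)
          = -(∑ p, (G : Matrix (Fin (n+1)) (Fin (n+1)) K) i p
              * (D (affH K n) : Matrix (Fin (n+1)) (Fin (n+1)) K) p (Fin.last n)) := by
        rw [← lie_skew, Matrix.neg_apply,
          lie_apply_tcol _ _ (aff_lastRow G) (fun a b hb => hDH a b hb), if_pos rfl]
      rw [e1] at h
      linear_combination -h
    apply Subtype.ext
    funext i k
    by_cases hi : i = Fin.last n
    · subst hi
      exact (aff_lastRow (D G) k).trans (aff_lastRow ⁅affV K n D, G⁆ k).symm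
    by_cases hk : k = Fin.last n
    · subst hk
      rw [LieSubalgebra.coe_bracket, Ring.lie_def, Matrix.sub_apply,
        Matrix.mul_apply, Matrix.mul_apply, hlastcol i]
      have eL : ∑ p, (affV K n D : Matrix (Fin (n+1)) (Fin (n+1)) K) i p
          * (G : Matrix (Fin (n+1)) (Fin (n+1)) K) p (Fin.last n) = 0 :=
        Finset.sum_eq_zero fun p _ => by rw [hG p, mul_zero]
      have e2 : ∀ p, (G : Matrix (Fin (n+1)) (Fin (n+1)) K) i p
          * (affV K n D : Matrix (Fin (n+1)) (Fin (n+1)) K) p (Fin.last n)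
          = -((G : Matrix (Fin (n+1)) (Fin (n+1)) K) i p
              * (D (affH K n) : Matrix (Fin (n+1)) (Fin (n+1)) K) p (Fin.last n)) := by
        intro p
        rw [affV_val]
        by_cases hp : p = Fin.last n
        · subst hp
          rw [if_pos rfl, mul_zero, aff_lastRow (D (affH K n)), mul_zero, neg_zero]
        · rw [if_neg hp, if_pos rfl, mul_neg]
      have eR : ∑ p, (G : Matrix (Fin (n+1)) (Fin (n+1)) K) i p
          * (affV K n D : Matrix (Fin (n+1)) (Fin (n+1)) K) p (Fin.last n)
          = -∑ p, (G : Matrix (Fin (n+1)) (Fin (n+1)) K) i p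
              * (D (affH K n) : Matrix (Fin (n+1)) (Fin (n+1)) K) p (Fin.last n) := by
        rw [← Finset.sum_neg_distrib]
        exact Finset.sum_congr rfl fun p _ => e2 p
      rw [eL, eR, zero_sub, neg_neg]
    · -- column k ≠ last
      have hTt : ∀ a b, b ≠ Fin.last n →
          ((⁅G, affE K n k⁆ : ↥(affLieSubalgebra K n)) :
            Matrix (Fin (n+1)) (Fin (n+1)) K) a b = 0 := by
        intro a b hb
        rw [LieSubalgebra.coe_bracket, affE_val hk, lie_E_apply _ (aff_lastRow G) hk,
          if_neg hb]
      have hdec := t_decomp _ hTt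
      have hco : ∀ p, ((⁅G, affE K n k⁆ : ↥(affLieSubalgebra K n)) :
            Matrix (Fin (n+1)) (Fin (n+1)) K) p (Fin.last n)
          = (G : Matrix (Fin (n+1)) (Fin (n+1)) K) p k := by
        intro p
        rw [LieSubalgebra.coe_bracket, affE_val hk, lie_E_apply _ (aff_lastRow G) hk,
          if_pos rfl]
      simp_rw [hco] at hdec
      have h := hD G (affE K n k)
      rw [hdec, map_sum] at h
      simp only [map_smul] at h
      have hsum : ((∑ x : Fin (n+1), ((G : Matrix (Fin (n+1)) (Fin (n+1)) K) x k)
            • D (affE K n x) : ↥(affLieSubalgebra K n)) :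
            Matrix (Fin (n+1)) (Fin (n+1)) K)
          = ∑ x : Fin (n+1), ((G : Matrix (Fin (n+1)) (Fin (n+1)) K) x k)
            • ((D (affE K n x)) : Matrix (Fin (n+1)) (Fin (n+1)) K) := by
        rw [AddSubmonoidClass.coe_finset_sum]
        exact Finset.sum_congr rfl fun p _ => rfl
      have h3 := congrArg Subtype.val h
      rw [hsum, AddMemClass.coe_add, LieSubalgebra.coe_bracket,
        LieSubalgebra.coe_bracket] at h3
      have h2 := congrFun (congrFun h3 i) (Fin.last n)
      rw [Matrix.sum_apply, Matrix.add_apply] at h2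
      simp only [Matrix.smul_apply, smul_eq_mul] at h2
      rw [affE_val hk, lie_E_apply _ (aff_lastRow (D G)) hk,
        lie_apply_tcol _ _ (aff_lastRow G) (fun a b hb => hDE k hk a b hb),
        if_pos rfl, if_pos rfl] at h2
      -- h2 : ∑ p, G p k * (D (affE p)) i last = (D G) i k + ∑ p, G i p * (D (affE k)) p last
      rw [LieSubalgebra.coe_bracket, Ring.lie_def, Matrix.sub_apply,
        Matrix.mul_apply, Matrix.mul_apply]
      have eA : ∑ p, (affV K n D : Matrix (Fin (n+1)) (Fin (n+1)) K) i p
          * (G : Matrix (Fin (n+1)) (Fin (n+1)) K) p k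
          = ∑ p, (G : Matrix (Fin (n+1)) (Fin (n+1)) K) p k
              * (D (affE K n p) : Matrix (Fin (n+1)) (Fin (n+1)) K) i (Fin.last n) := by
        refine Finset.sum_congr rfl fun p _ => ?_
        by_cases hp : p = Fin.last n
        · subst hp
          rw [aff_lastRow G, mul_zero]
          simp [affE]
        · rw [affV_val, if_neg hi, if_neg hp, mul_comm]
      have eB : ∑ p, (G : Matrix (Fin (n+1)) (Fin (n+1)) K) i p
          * (affV K n D : Matrix (Fin (n+1)) (Fin (n+1)) K) p k
          = ∑ p, (G : Matrix (Fin (n+1)) (Fin (n+1)) K) i p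
              * (D (affE K n k) : Matrix (Fin (n+1)) (Fin (n+1)) K) p (Fin.last n) := by
        refine Finset.sum_congr rfl fun p _ => ?_
        by_cases hp : p = Fin.last n
        · subst hp
          rw [hG i, zero_mul, zero_mul]
        · rw [affV_val, if_neg hp, if_neg hk]
      rw [eA, eB]
      linear_combination -h2
  -- assembly
  refine ⟨affV K n D, fun X => ?_⟩
  have hXlast : ∀ k, k = Fin.last n → (X : Matrix (Fin (n+1)) (Fin (n+1)) K)
      (Fin.last n) (Fin.last n) = 0 := fun _ _ => aff_lastRow X _
  set Tm : ↥(affLieSubalgebra K n) :=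
    ⟨Matrix.of fun i k => if k = Fin.last n
        then (X : Matrix (Fin (n+1)) (Fin (n+1)) K) i (Fin.last n) else 0,
      fun k => by
        by_cases hk : k = Fin.last n <;> simp [hk, aff_lastRow X]⟩ with hTm
  have hTmval : ∀ i k, (Tm : Matrix (Fin (n+1)) (Fin (n+1)) K) i k
      = if k = Fin.last n
        then (X : Matrix (Fin (n+1)) (Fin (n+1)) K) i (Fin.last n) else 0 := by
    intro i k
    rw [hTm]
    rfl
  have hG : ∀ i, ((X - Tm : ↥(affLieSubalgebra K n)) :
      Matrix (Fin (n+1)) (Fin (n+1)) K) i (Fin.last n) = 0 := by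
    intro i
    rw [AddSubgroupClass.coe_sub, Matrix.sub_apply, hTmval, if_pos rfl, sub_self]
  have hDG := Gcase (X - Tm) hG
  have hTt : ∀ i k, k ≠ Fin.last n →
      (Tm : Matrix (Fin (n+1)) (Fin (n+1)) K) i k = 0 := by
    intro i k hk
    rw [hTmval, if_neg hk]
  have hDT : D Tm = ⁅affV K n D, Tm⁆ := by
    have hdecT := t_decomp Tm hTt
    calc D Tm = ∑ p, ((Tm : Matrix (Fin (n+1)) (Fin (n+1)) K) p (Fin.last n))
          • D (affE K n p) := by
          conv_lhs => rw [hdecT]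
          rw [map_sum]
          simp only [map_smul]
      _ = ∑ p, ((Tm : Matrix (Fin (n+1)) (Fin (n+1)) K) p (Fin.last n))
          • ⁅affV K n D, affE K n p⁆ := by
          refine Finset.sum_congr rfl fun p _ => ?_
          by_cases hp : p = Fin.last n
          · subst hp
            simp [affE]
          · rw [hVE p hp]
      _ = ⁅affV K n D, Tm⁆ := by
          conv_rhs => rw [hdecT, ← LieAlgebra.ad_apply (R := K)]
          rw [map_sum]
          simp only [map_smul, LieAlgebra.ad_apply]
  have hXsplit : (X - Tm) + Tm = X := sub_add_cancel X Tm
  rw [← hXsplit, map_add, lie_add, hDG, hDT]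
end

section
/- Let n ≥ 1, let Ω be the standard symplectic form on ℝ^{2n}, Ω(u,v) = Σ_{i=1}^{n} (uᵢ v_{n+i} − u_{n+i} vᵢ), let k ∈ ℝ with k ≠ 0, and let ξ : ℝ^{2n} → ℝ^{2n} be a linear map satisfying Ω(ξ(u), v) + Ω(u, ξ(v)) = k·Ω(u,v) for all u, v. Define a bracket on V := ℝ × ℝ × ℝ^{2n} by ⁅(a,b,u), (a',b',u')⁆ := (0, k(ab' − a'b) + Ω(u,u'), a·ξ(u') − a'·ξ(u)). Then this bracket is bilinear, antisymmetric, and satisfies the Jacobi identity, so V is a Lie algebra of dimension 2n+2; moreover the linear functional α(a,b,u) := b is a Frobenius functional, i.e., the bilinear form ω(x,y) := −α(⁅x,y⁆) on V is nondegenerate. -/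
/-- The standard symplectic form on `ℝ^{2n}` (indexed by `Fin (n + n)`):
`Ω(u,v) = Σᵢ (uᵢ v_{n+i} − u_{n+i} vᵢ)`. -/
noncomputable def stdSymplectic (n : ℕ) (u v : Fin (n + n) → ℝ) : ℝ :=
  ∑ i : Fin n,
    (u (Fin.castAdd n i) * v (Fin.natAdd n i) - u (Fin.natAdd n i) * v (Fin.castAdd n i))

/-- The bracket on `V = ℝ × ℝ × ℝ^{2n}` of Section 7 (Examples):
`⁅(a,b,u), (a',b',u')⁆ = (0, k(ab' − a'b) + Ω(u,u'), a·ξ(u') − a'·ξ(u))`. -/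
noncomputable def exBracket (n : ℕ) (k : ℝ)
    (ξ : (Fin (n + n) → ℝ) →ₗ[ℝ] (Fin (n + n) → ℝ)) :
    ℝ × ℝ × (Fin (n + n) → ℝ) → ℝ × ℝ × (Fin (n + n) → ℝ) → ℝ × ℝ × (Fin (n + n) → ℝ) :=
  fun x y =>
    (0, k * (x.1 * y.2.1 - y.1 * x.2.1) + stdSymplectic n x.2.2 y.2.2,
      x.1 • ξ y.2.2 - y.1 • ξ x.2.2)

lemma cast_ne_nat (n : ℕ) (i j : Fin n) : Fin.castAdd n i ≠ Fin.natAdd n j := by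
  have := i.isLt
  simp only [Fin.ne_iff_vne, Fin.coe_castAdd, Fin.coe_natAdd]
  omega

lemma nat_eq_nat (n : ℕ) (i j : Fin n) : Fin.natAdd n i = Fin.natAdd n j ↔ i = j := by
  simp [Fin.ext_iff]

lemma stdS_smul_left (n : ℕ) (c : ℝ) (u v : Fin (n+n) → ℝ) :
    stdSymplectic n (c • u) v = c * stdSymplectic n u v := by
  rw [stdSymplectic, stdSymplectic, Finset.mul_sum]
  refine Finset.sum_congr rfl fun i _ => by simp; ring

lemma stdS_add_left (n : ℕ) (u u' v : Fin (n+n) → ℝ) :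
    stdSymplectic n (u + u') v = stdSymplectic n u v + stdSymplectic n u' v := by
  rw [stdSymplectic, stdSymplectic, stdSymplectic, ← Finset.sum_add_distrib]
  refine Finset.sum_congr rfl fun i _ => by simp; ring

lemma stdS_antisym (n : ℕ) (u v : Fin (n+n) → ℝ) :
    stdSymplectic n v u = - stdSymplectic n u v := by
  rw [stdSymplectic, stdSymplectic, ← Finset.sum_neg_distrib]
  refine Finset.sum_congr rfl fun i _ => by ring

lemma stdS_single_nat (n : ℕ) (u : Fin (n+n) → ℝ) (j : Fin n) :
    stdSymplectic n u (Pi.single (Fin.natAdd n j) 1) = u (Fin.castAdd n j) := by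
  rw [stdSymplectic, Finset.sum_eq_single j]
  · rw [Pi.single_eq_same, Pi.single_eq_of_ne (cast_ne_nat n j j)]; ring
  · intro i _ hij
    rw [Pi.single_eq_of_ne (cast_ne_nat n i j),
      Pi.single_eq_of_ne (fun h => hij ((nat_eq_nat n i j).mp h))]
    ring
  · simp

lemma stdS_single_cast (n : ℕ) (u : Fin (n+n) → ℝ) (j : Fin n) :
    stdSymplectic n u (Pi.single (Fin.castAdd n j) 1) = - u (Fin.natAdd n j) := by
  rw [stdSymplectic, Finset.sum_eq_single j]
  · rw [Pi.single_eq_same, Pi.single_eq_of_ne (Ne.symm (cast_ne_nat n j j))]; ring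
  · intro i _ hij
    rw [Pi.single_eq_of_ne (Ne.symm (cast_ne_nat n j i)),
      Pi.single_eq_of_ne (fun h => hij (Fin.castAdd_injective n n h))]
    ring
  · simp

lemma stdS_smul_right (n : ℕ) (c : ℝ) (u v : Fin (n+n) → ℝ) :
    stdSymplectic n u (c • v) = c * stdSymplectic n u v := by
  rw [stdS_antisym, stdS_smul_left, stdS_antisym n u v]; ring

lemma stdS_add_right (n : ℕ) (u v v' : Fin (n+n) → ℝ) :
    stdSymplectic n u (v + v') = stdSymplectic n u v + stdSymplectic n u v' := by
  rw [stdS_antisym, stdS_add_left, stdS_antisym n u v, stdS_antisym n u v']; ring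

lemma stdS_sub_right (n : ℕ) (u v v' : Fin (n+n) → ℝ) :
    stdSymplectic n u (v - v') = stdSymplectic n u v - stdSymplectic n u v' := by
  rw [sub_eq_add_neg, stdS_add_right, ← neg_one_smul ℝ v', stdS_smul_right]; ring

lemma stdS_zero_right (n : ℕ) (u : Fin (n+n) → ℝ) : stdSymplectic n u 0 = 0 := by
  simp [stdSymplectic]

/-- For `n ≥ 1`, `k ≠ 0` and `ξ` infinitesimally conformal with factor `k`
for the standard symplectic form `Ω` on `ℝ^{2n}`, the bracket above is bilinear,
antisymmetric and satisfies the Jacobi identity (so `V = ℝ × ℝ × ℝ^{2n}` is a Lie algebra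
of dimension `2n+2`); moreover the functional `α(a,b,u) := b` is a Frobenius functional,
i.e. the form `ω(x,y) := -α(⁅x,y⁆)` is nondegenerate. -/
theorem stmt_18 (n : ℕ) (hn : 1 ≤ n) (k : ℝ) (hk : k ≠ 0)
    (ξ : (Fin (n + n) → ℝ) →ₗ[ℝ] (Fin (n + n) → ℝ))
    (hconf : ∀ u v : Fin (n + n) → ℝ,
      stdSymplectic n (ξ u) v + stdSymplectic n u (ξ v) = k * stdSymplectic n u v) :
    (∀ (c : ℝ) (x x' y : ℝ × ℝ × (Fin (n + n) → ℝ)),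
        exBracket n k ξ (c • x + x') y =
          c • exBracket n k ξ x y + exBracket n k ξ x' y) ∧
      (∀ (c : ℝ) (x y y' : ℝ × ℝ × (Fin (n + n) → ℝ)),
        exBracket n k ξ x (c • y + y') =
          c • exBracket n k ξ x y + exBracket n k ξ x y') ∧
      (∀ x y : ℝ × ℝ × (Fin (n + n) → ℝ),
        exBracket n k ξ x y = -exBracket n k ξ y x) ∧
      (∀ x y z : ℝ × ℝ × (Fin (n + n) → ℝ),
        exBracket n k ξ x (exBracket n k ξ y z) +
            exBracket n k ξ y (exBracket n k ξ z x) +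
            exBracket n k ξ z (exBracket n k ξ x y) = 0) ∧
      (∀ x : ℝ × ℝ × (Fin (n + n) → ℝ),
        (∀ y : ℝ × ℝ × (Fin (n + n) → ℝ), -(exBracket n k ξ x y).2.1 = 0) → x = 0) := by
  refine ⟨?_, ?_, ?_, ?_, ?_⟩
  · rintro c ⟨a, b, u⟩ ⟨a', b', u'⟩ ⟨a'', b'', u''⟩
    refine Prod.ext (by simp [exBracket]) (Prod.ext ?_ ?_)
    · show k * ((c * a + a') * b'' - a'' * (c * b + b')) +
        stdSymplectic n (c • u + u') u'' = _
      rw [stdS_add_left, stdS_smul_left]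
      show _ = c * (k * (a * b'' - a'' * b) + stdSymplectic n u u'') +
        (k * (a' * b'' - a'' * b') + stdSymplectic n u' u'')
      ring
    · show (c * a + a') • ξ u'' - a'' • ξ (c • u + u') =
        c • (a • ξ u'' - a'' • ξ u) + (a' • ξ u'' - a'' • ξ u')
      rw [map_add, map_smul]
      module
  · rintro c ⟨a, b, u⟩ ⟨a', b', u'⟩ ⟨a'', b'', u''⟩
    refine Prod.ext (by simp [exBracket]) (Prod.ext ?_ ?_)
    · show k * (a * (c * b' + b'') - (c * a' + a'') * b) +
        stdSymplectic n u (c • u' + u'') = _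
      rw [stdS_add_right, stdS_smul_right]
      show _ = c * (k * (a * b' - a' * b) + stdSymplectic n u u') +
        (k * (a * b'' - a'' * b) + stdSymplectic n u u'')
      ring
    · show a • ξ (c • u' + u'') - (c * a' + a'') • ξ u =
        c • (a • ξ u' - a' • ξ u) + (a • ξ u'' - a'' • ξ u)
      rw [map_add, map_smul]
      module
  · rintro ⟨a, b, u⟩ ⟨a', b', u'⟩
    refine Prod.ext (by simp [exBracket]) (Prod.ext ?_ ?_)
    · show k * (a * b' - a' * b) + stdSymplectic n u u' =
        -(k * (a' * b - a * b') + stdSymplectic n u' u)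
      rw [stdS_antisym n u u']; ring
    · show a • ξ u' - a' • ξ u = -(a' • ξ u - a • ξ u')
      module
  · rintro ⟨a, b, u⟩ ⟨a', b', u'⟩ ⟨a'', b'', u''⟩
    refine Prod.ext (by simp [exBracket]) (Prod.ext ?_ ?_)
    · show (k * (a * (k * (a' * b'' - a'' * b') + stdSymplectic n u' u'') - 0 * b) +
          stdSymplectic n u (a' • ξ u'' - a'' • ξ u')) +
        ((k * (a' * (k * (a'' * b - a * b'') + stdSymplectic n u'' u) - 0 * b') +
          stdSymplectic n u' (a'' • ξ u - a • ξ u''))) +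
        ((k * (a'' * (k * (a * b' - a' * b) + stdSymplectic n u u') - 0 * b'') +
          stdSymplectic n u'' (a • ξ u' - a' • ξ u))) = 0
      rw [stdS_sub_right, stdS_sub_right, stdS_sub_right,
        stdS_smul_right, stdS_smul_right, stdS_smul_right,
        stdS_smul_right, stdS_smul_right, stdS_smul_right]
      linear_combination a * (stdS_antisym n (ξ u') u'' - hconf u' u'') +
        a' * (stdS_antisym n (ξ u'') u - hconf u'' u) +
        a'' * (stdS_antisym n (ξ u) u' - hconf u u')
    · show (a • ξ (a' • ξ u'' - a'' • ξ u') - 0 • ξ u +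
        (a' • ξ (a'' • ξ u - a • ξ u'') - 0 • ξ u')) +
          (a'' • ξ (a • ξ u' - a' • ξ u) - 0 • ξ u'') = (0 : Fin (n+n) → ℝ)
      rw [map_sub, map_sub, map_sub, map_smul, map_smul, map_smul, map_smul,
        map_smul, map_smul]
      module
  · rintro ⟨a, b, u⟩ hx
    have hb : b = 0 := by
      have := hx (1, 0, 0)
      simp only [exBracket, stdS_zero_right] at this
      have : k * b = 0 := by linarith [this]
      exact (mul_eq_zero.mp this).resolve_left hk
    have ha : a = 0 := by
      have := hx (0, 1, 0)
      simp only [exBracket, stdS_zero_right] at this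
      have : k * a = 0 := by linarith [this]
      exact (mul_eq_zero.mp this).resolve_left hk
    have hu : u = 0 := by
      funext j
      refine Fin.addCases (fun j' => ?_) (fun j' => ?_) j
      · have := hx (0, 0, Pi.single (Fin.natAdd n j') 1)
        simp only [exBracket, stdS_single_nat] at this
        simpa using this
      · have := hx (0, 0, Pi.single (Fin.castAdd n j') 1)
        simp only [exBracket, stdS_single_cast] at this
        simpa using this
    simp [ha, hb, hu]
end

section
/- There exists a 4-dimensional real Frobenius Lie algebra (L, α) whose principal element x₀ has non-semisimple adjoint operator: ad x₀ is not a semisimple endomorphism of L (it has an invariant subspace with no invariant complement). For instance, the Lie algebra with basis (e₋₁, e₀, e₁, e₂) and nonzero brackets ⁅e₁,e₂⁆ = e₀, ⁅e₋₁,e₀⁆ = −2e₀, ⁅e₋₁,e₁⁆ = −e₁, ⁅e₋₁,e₂⁆ = −e₁ − e₂, with Frobenius functional α = e₀*, has principal element x₀ = (1/2)e₋₁ whose adjoint is not diagonalizable. -/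
/-- The data of a 4-dimensional real Frobenius Lie algebra whose principal element `x₀`
has non-semisimple adjoint operator (some `ad x₀`-invariant subspace admits no
`ad x₀`-invariant complement). -/
structure NonSemisimplePrincipalExample where
  /-- The underlying Lie algebra. -/
  L : Type
  [lieRing : LieRing L]
  [lieAlgebra : LieAlgebra ℝ L]
  [finDim : FiniteDimensional ℝ L]
  /-- `L` is 4-dimensional. -/
  dim_eq : Module.finrank ℝ L = 4
  /-- The Frobenius functional. -/
  α : Module.Dual ℝ L
  /-- The form `ω(x,y) = -α(⁅x,y⁆)` is nondegenerate. -/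
  nondeg : ∀ x : L, (∀ y : L, -α ⁅x, y⁆ = 0) → x = 0
  /-- The principal element. -/
  x₀ : L
  /-- `x₀` is the principal element: `ω(x₀, y) = α(y)` for all `y`. -/
  principal : ∀ y : L, -α ⁅x₀, y⁆ = α y
  /-- `ad x₀` is not semisimple: it has an invariant subspace with no invariant
  complement. -/
  not_semisimple : ¬ ∀ p : Submodule ℝ L, (∀ v ∈ p, ⁅x₀, v⁆ ∈ p) →
      ∃ q : Submodule ℝ L, (∀ v ∈ q, ⁅x₀, v⁆ ∈ q) ∧ IsCompl p q


noncomputable section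
namespace Stmt19

def V : Type := Fin 4 → ℝ

instance : AddCommGroup V := inferInstanceAs (AddCommGroup (Fin 4 → ℝ))
instance : Module ℝ V := inferInstanceAs (Module ℝ (Fin 4 → ℝ))
instance : FiniteDimensional ℝ V := inferInstanceAs (FiniteDimensional ℝ (Fin 4 → ℝ))

def br (x y : V) : V :=
  ![0,
    x 2 * y 3 - x 3 * y 2 - 2 * (x 0 * y 1 - x 1 * y 0),
    -(x 0 * y 2 - x 2 * y 0) - (x 0 * y 3 - x 3 * y 0),
    -(x 0 * y 3 - x 3 * y 0)]

instance : Bracket V V := ⟨br⟩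

lemma br_apply (x y : V) (i : Fin 4) : ⁅x, y⁆ i = br x y i := rfl

lemma add_apply (x y : V) (i : Fin 4) : (x + y) i = x i + y i := rfl
lemma smul_apply (c : ℝ) (x : V) (i : Fin 4) : (c • x) i = c * x i := rfl
lemma sub_apply (x y : V) (i : Fin 4) : (x - y) i = x i - y i := rfl
lemma neg_apply (x : V) (i : Fin 4) : (-x) i = -(x i) := rfl
lemma zero_apply (i : Fin 4) : (0 : V) i = 0 := rfl

instance : LieRing V where
  add_lie x y z := by
    funext i; fin_cases i <;>
      simp [br_apply, br, add_apply] <;> ring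
  lie_add x y z := by
    funext i; fin_cases i <;>
      simp [br_apply, br, add_apply] <;> ring
  lie_self x := by
    funext i; fin_cases i <;>
      simp [br_apply, br, zero_apply] <;> ring
  leibniz_lie x y z := by
    funext i; fin_cases i <;>
      simp [br_apply, br, add_apply] <;> ring

instance : LieAlgebra ℝ V where
  lie_smul c x y := by
    funext i; fin_cases i <;>
      simp [br_apply, br, smul_apply] <;> ring

def α : Module.Dual ℝ V where
  toFun x := x 1
  map_add' x y := rfl
  map_smul' c x := rfl

lemma α_apply (x : V) : α x = x 1 := rfl

def x₀ : V := ![1/2, 0, 0, 0]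

def e2 : V := ![0, 0, 1, 0]
def e3 : V := ![0, 0, 0, 1]

theorem stmt_19' : Nonempty NonSemisimplePrincipalExample := by
  refine ⟨⟨V, ?_, α, ?_, x₀, ?_, ?_⟩⟩
  · -- dim
    show Module.finrank ℝ (Fin 4 → ℝ) = 4
    simp
  · -- nondeg
    intro x hx
    have h0 := hx ![1,0,0,0]
    have h1 := hx ![0,1,0,0]
    have h2 := hx ![0,0,1,0]
    have h3 := hx ![0,0,0,1]
    change -(br x _ 1) = 0 at h0
    change -(br x _ 1) = 0 at h1
    change -(br x _ 1) = 0 at h2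
    change -(br x _ 1) = 0 at h3
    simp only [br] at h0 h1 h2 h3
    simp at h0 h1 h2 h3
    funext i; fin_cases i <;> simp only [zero_apply] <;>
      first | exact h0 | exact h1 | exact h2 | exact h3
  · -- principal
    intro y
    change -(br x₀ y 1) = y 1
    simp only [br, x₀]
    simp
  · -- not semisimple
    intro h
    have hpinv : ∀ v ∈ Submodule.span ℝ {e2}, ⁅x₀, v⁆ ∈ Submodule.span ℝ {e2} := by
      intro v hv
      obtain ⟨c, rfl⟩ := Submodule.mem_span_singleton.mp hv
      refine Submodule.mem_span_singleton.mpr ⟨-(c/2), ?_⟩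
      funext i; fin_cases i <;>
        simp only [br_apply, br, smul_apply] <;> simp [x₀, e2] <;> ring
    obtain ⟨q, hqinv, hcompl⟩ := h (Submodule.span ℝ {e2}) hpinv
    have he3 : e3 ∈ Submodule.span ℝ {e2} ⊔ q := by
      rw [hcompl.sup_eq_top]; exact Submodule.mem_top
    obtain ⟨a, ha, b, hb, hab⟩ := Submodule.mem_sup.mp he3
    obtain ⟨c, rfl⟩ := Submodule.mem_span_singleton.mp ha
    have hbval : b = e3 - c • e2 := by
      rw [← hab]; abel
    have hu : ⁅x₀, b⁆ + (1/2 : ℝ) • b ∈ q :=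
      q.add_mem (hqinv b hb) (q.smul_mem _ hb)
    have hval : ⁅x₀, b⁆ + (1/2 : ℝ) • b = (-(1/2) : ℝ) • e2 := by
      subst hbval
      funext i; fin_cases i <;>
        simp only [br_apply, br, add_apply, smul_apply, sub_apply] <;> simp [x₀, e2, e3] <;> ring
    rw [hval] at hu
    have hup : (-(1/2) : ℝ) • e2 ∈ Submodule.span ℝ {e2} :=
      Submodule.smul_mem _ _ (Submodule.mem_span_singleton_self _)
    have : (-(1/2) : ℝ) • e2 = (0 : V) := by
      have hmem : (-(1/2) : ℝ) • e2 ∈ Submodule.span ℝ {e2} ⊓ q := ⟨hup, hu⟩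
      rw [hcompl.inf_eq_bot] at hmem
      exact hmem
    have := congrFun this 2
    simp only [smul_apply, zero_apply] at this; simp [e2] at this

end Stmt19
end

/-- There exists a 4-dimensional real Frobenius Lie algebra whose principal
element has non-semisimple adjoint operator (e.g. the one with basis `(e₋₁,e₀,e₁,e₂)`,
brackets `⁅e₁,e₂⁆ = e₀`, `⁅e₋₁,e₀⁆ = -2e₀`, `⁅e₋₁,e₁⁆ = -e₁`, `⁅e₋₁,e₂⁆ = -e₁-e₂`,
Frobenius functional `α = e₀*` and principal element `x₀ = (1/2)e₋₁`). -/
theorem stmt_19 : Nonempty NonSemisimplePrincipalExample := Stmt19.stmt_19'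
end
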